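/- arXiv:2101.05573 — 3 statements merged into one kernel-verified Lean document; each statement's English description precedes it below -/
import Mathlib

section
/- Suppose (A,B) is controllable, (A,C) is observable with lag at most l, and the extended state ξ_k stacks the past l inputs and outputs with dynamics ξ_{k+1} = Ã ξ_k + B̃ u_k. Then (Ã, B̃) is controllable if and only if the observability matrix Φ_l = [C; CA; ...; CA^{l-1}] is square (i.e., pl = n). -/
open Matrix

/-- Observability matrix `Φ_l = [C; CA; ...; CA^{l-1}]`. -/
def obsvMat {n p : ℕ} (A : Matrix (Fin n) (Fin n) ℝ) (C : Matrix (Fin p) (Fin n) ℝ)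
    (l : ℕ) : Matrix (Fin l × Fin p) (Fin n) ℝ :=
  fun q j => (C * A ^ (q.1 : ℕ)) q.2 j

/-- Extended-state index: `l` past inputs (left) and `l` past outputs (right). -/
abbrev ExtIdx (l m p : ℕ) := (Fin l × Fin m) ⊕ (Fin l × Fin p)

/-- The extended-state transition matrix `Ã` of equation (8): shift registers for the past
inputs and outputs, with the bottom output row given by the ARX coefficients `F_j` (on past
outputs `y_{k-l+j}`) and `G_j` (on past inputs `u_{k-l+j}`). -/
def Atil (l m p : ℕ) (F : Fin l → Matrix (Fin p) (Fin p) ℝ)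
    (G : Fin l → Matrix (Fin p) (Fin m) ℝ) :
    Matrix (ExtIdx l m p) (ExtIdx l m p) ℝ :=
  fun s t => match s, t with
  | .inl (i, a), .inl (j, b) => if (i : ℕ) + 1 = (j : ℕ) ∧ a = b then 1 else 0
  | .inl _, .inr _ => 0
  | .inr (i, c), .inl (j, b) => if (i : ℕ) = l - 1 then G j c b else 0
  | .inr (i, c), .inr (j, c') =>
      if (i : ℕ) = l - 1 then F j c c'
      else if (i : ℕ) + 1 = (j : ℕ) ∧ c = c' then 1 else 0

/-- The extended-state input matrix `B̃` of equation (8). -/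
def Btil (l m p : ℕ) (D0 : Matrix (Fin p) (Fin m) ℝ) :
    Matrix (ExtIdx l m p) (Fin m) ℝ :=
  fun s a => match s with
  | .inl (i, b) => if (i : ℕ) = l - 1 ∧ a = b then 1 else 0
  | .inr (i, c) => if (i : ℕ) = l - 1 then D0 c a else 0

/-- Kalman controllability: the controllability matrix has full row rank. -/
def Controllable {ι : Type*} [Fintype ι] [DecidableEq ι] {m : ℕ}
    (A : Matrix ι ι ℝ) (B : Matrix ι (Fin m) ℝ) : Prop :=
  (Matrix.of fun (i : ι) (q : Fin (Fintype.card ι) × Fin m) =>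
    ((A ^ (q.1 : ℕ)) * B) i q.2).rank = Fintype.card ι


namespace ECIS

variable {n m p l : ℕ}

/-- State trajectory of `x_{k+1} = A x_k + B u_k`. -/
def traj (A : Matrix (Fin n) (Fin n) ℝ) (B : Matrix (Fin n) (Fin m) ℝ)
    (x0 : Fin n → ℝ) (u : ℕ → Fin m → ℝ) : ℕ → Fin n → ℝ
  | 0 => x0
  | k + 1 => A.mulVec (traj A B x0 u k) + B.mulVec (u k)

lemma traj_dyn (A : Matrix (Fin n) (Fin n) ℝ) (B : Matrix (Fin n) (Fin m) ℝ)
    (x0 : Fin n → ℝ) (u : ℕ → Fin m → ℝ) (k : ℕ) :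
    traj A B x0 u (k + 1) = A.mulVec (traj A B x0 u k) + B.mulVec (u k) := rfl

lemma traj_congr (A : Matrix (Fin n) (Fin n) ℝ) (B : Matrix (Fin n) (Fin m) ℝ)
    (x0 : Fin n → ℝ) {u u' : ℕ → Fin m → ℝ} (k : ℕ) (h : ∀ j < k, u j = u' j) :
    traj A B x0 u k = traj A B x0 u' k := by
  induction k with
  | zero => rfl
  | succ k ih =>
    rw [traj_dyn, traj_dyn, ih fun j hj => h j (hj.trans (Nat.lt_succ_self k)),
      h k (Nat.lt_succ_self k)]

lemma traj_add (A : Matrix (Fin n) (Fin n) ℝ) (B : Matrix (Fin n) (Fin m) ℝ)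
    (x0 x1 : Fin n → ℝ) (u0 u1 : ℕ → Fin m → ℝ) (k : ℕ) :
    traj A B (x0 + x1) (fun j => u0 j + u1 j) k = traj A B x0 u0 k + traj A B x1 u1 k := by
  induction k with
  | zero => rfl
  | succ k ih => simp [traj_dyn, ih, Matrix.mulVec_add]; abel

lemma traj_smul (A : Matrix (Fin n) (Fin n) ℝ) (B : Matrix (Fin n) (Fin m) ℝ)
    (r : ℝ) (x0 : Fin n → ℝ) (u : ℕ → Fin m → ℝ) (k : ℕ) :
    traj A B (r • x0) (fun j => r • u j) k = r • traj A B x0 u k := by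
  induction k with
  | zero => rfl
  | succ k ih => simp [traj_dyn, ih, Matrix.mulVec_smul]

lemma traj_shift (A : Matrix (Fin n) (Fin n) ℝ) (B : Matrix (Fin n) (Fin m) ℝ)
    (x0 : Fin n → ℝ) (u : ℕ → Fin m → ℝ) (s k : ℕ) :
    traj A B x0 u (s + k) = traj A B (traj A B x0 u s) (fun j => u (s + j)) k := by
  induction k with
  | zero => rfl
  | succ k ih => rw [← Nat.add_assoc, traj_dyn, ih]; rfl

lemma traj_zero (A : Matrix (Fin n) (Fin n) ℝ) (B : Matrix (Fin n) (Fin m) ℝ)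
    (u : ℕ → Fin m → ℝ) (k : ℕ) (h : ∀ j < k, u j = 0) :
    traj A B 0 u k = 0 := by
  induction k with
  | zero => rfl
  | succ k ih =>
    rw [traj_dyn, ih fun j hj => h j (hj.trans (Nat.lt_succ_self k)), h k (Nat.lt_succ_self k)]
    simp

lemma traj_sum (A : Matrix (Fin n) (Fin n) ℝ) (B : Matrix (Fin n) (Fin m) ℝ)
    (u : ℕ → Fin m → ℝ) (N : ℕ) :
    traj A B 0 u N = ∑ j ∈ Finset.range N, (A ^ (N - 1 - j)).mulVec (B.mulVec (u j)) := by
  induction N with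
  | zero => simp [traj]
  | succ N ih =>
    rw [traj_dyn, ih, Finset.sum_range_succ]
    congr 1
    · simp only [← Matrix.mulVecLin_apply, map_sum]
      refine Finset.sum_congr rfl fun j hj => ?_
      simp only [Finset.mem_range] at hj
      have hE : N + 1 - 1 - j = (N - 1 - j) + 1 := by omega
      simp only [Matrix.mulVecLin_apply, hE, pow_succ', Matrix.mulVec_mulVec]
      exact congrArg (· *ᵥ u j) (Matrix.mul_assoc A (A ^ (N - 1 - j)) B).symm
    · simp

lemma mulVec_apply {ι κ : Type*} [Fintype κ] (M : Matrix ι κ ℝ) (v : κ → ℝ) (i : ι) :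
    M.mulVec v i = ∑ j, M i j * v j := rfl

variable {F : Fin l → Matrix (Fin p) (Fin p) ℝ} {G : Fin l → Matrix (Fin p) (Fin m) ℝ}

lemma atil_mulVec_inl (ξ : ExtIdx l m p → ℝ) (i : Fin l) (a : Fin m) :
    (Atil l m p F G).mulVec ξ (Sum.inl (i, a)) =
      if h : (i : ℕ) + 1 < l then ξ (Sum.inl (⟨(i : ℕ) + 1, h⟩, a)) else 0 := by
  rw [mulVec_apply]
  by_cases h : (i : ℕ) + 1 < l
  · rw [dif_pos h, Finset.sum_eq_single (Sum.inl (⟨(i : ℕ) + 1, h⟩, a) : ExtIdx l m p)]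
    · simp [Atil]
    · rintro (⟨j, b⟩ | ⟨j, c⟩) - hne
      · have hc : ¬((i : ℕ) + 1 = (j : ℕ) ∧ a = b) := by
          rintro ⟨h1, h2⟩
          exact hne (by subst h2; exact congrArg Sum.inl (by rw [Prod.mk.injEq]; exact ⟨Fin.ext h1.symm, rfl⟩))
        simp [Atil, hc]
      · simp [Atil]
    · intro habs; exact absurd (Finset.mem_univ _) habs
  · rw [dif_neg h]
    apply Finset.sum_eq_zero
    rintro (⟨j, b⟩ | ⟨j, c⟩) -
    · have hc : ¬((i : ℕ) + 1 = (j : ℕ) ∧ a = b) := fun hc => h (hc.1 ▸ j.isLt)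
      simp [Atil, hc]
    · simp [Atil]

lemma atil_mulVec_inr_bot (ξ : ExtIdx l m p → ℝ) (i : Fin l) (c : Fin p)
    (hi : (i : ℕ) = l - 1) :
    (Atil l m p F G).mulVec ξ (Sum.inr (i, c)) =
      (∑ j : Fin l, (G j).mulVec (fun b => ξ (Sum.inl (j, b))) c)
      + ∑ j : Fin l, (F j).mulVec (fun c' => ξ (Sum.inr (j, c'))) c := by
  rw [mulVec_apply, Fintype.sum_sum_type]
  congr 1
  · rw [Fintype.sum_prod_type]
    refine Finset.sum_congr rfl fun j _ => ?_
    rw [mulVec_apply]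
    refine Finset.sum_congr rfl fun b _ => ?_
    simp [Atil, hi]
  · rw [Fintype.sum_prod_type]
    refine Finset.sum_congr rfl fun j _ => ?_
    rw [mulVec_apply]
    refine Finset.sum_congr rfl fun c' _ => ?_
    simp [Atil, hi]

lemma atil_mulVec_inr_shift (ξ : ExtIdx l m p → ℝ) (i : Fin l) (c : Fin p)
    (h : (i : ℕ) + 1 < l) (hne : (i : ℕ) ≠ l - 1) :
    (Atil l m p F G).mulVec ξ (Sum.inr (i, c)) = ξ (Sum.inr (⟨(i : ℕ) + 1, h⟩, c)) := by
  rw [mulVec_apply, Finset.sum_eq_single (Sum.inr (⟨(i : ℕ) + 1, h⟩, c) : ExtIdx l m p)]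
  · simp [Atil, hne]
  · rintro (⟨j, b⟩ | ⟨j, c'⟩) - hneq
    · simp [Atil, hne]
    · have hc : ¬((i : ℕ) + 1 = (j : ℕ) ∧ c = c') := by
        rintro ⟨h1, h2⟩
        exact hneq (by subst h2; exact congrArg Sum.inr (by rw [Prod.mk.injEq]; exact ⟨Fin.ext h1.symm, rfl⟩))
      simp [Atil, hne, hc]
  · intro habs; exact absurd (Finset.mem_univ _) habs

lemma btil_mulVec_inl (D0 : Matrix (Fin p) (Fin m) ℝ) (u0 : Fin m → ℝ) (i : Fin l) (a : Fin m) :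
    (Btil l m p D0).mulVec u0 (Sum.inl (i, a)) = if (i : ℕ) = l - 1 then u0 a else 0 := by
  rw [mulVec_apply]
  by_cases hi : (i : ℕ) = l - 1
  · rw [if_pos hi, Finset.sum_eq_single a]
    · simp [Btil, hi]
    · intro b _ hb
      have hc : ¬((i : ℕ) = l - 1 ∧ b = a) := fun hc => hb hc.2
      simp [Btil, hc]
    · intro habs; exact absurd (Finset.mem_univ _) habs
  · rw [if_neg hi]
    apply Finset.sum_eq_zero
    intro b _
    simp [Btil, hi]

lemma btil_mulVec_inr (D0 : Matrix (Fin p) (Fin m) ℝ) (u0 : Fin m → ℝ) (i : Fin l) (c : Fin p) :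
    (Btil l m p D0).mulVec u0 (Sum.inr (i, c)) =
      if (i : ℕ) = l - 1 then D0.mulVec u0 c else 0 := by
  rw [mulVec_apply]
  by_cases hi : (i : ℕ) = l - 1
  · rw [if_pos hi, mulVec_apply]
    refine Finset.sum_congr rfl fun b _ => ?_
    simp [Btil, hi]
  · rw [if_neg hi]
    apply Finset.sum_eq_zero
    intro b _
    simp [Btil, hi]

/-- Stacked extended state at time `k ≥ l`. -/
def stack (l : ℕ) (u : ℕ → Fin m → ℝ) (y : ℕ → Fin p → ℝ) (k : ℕ) : ExtIdx l m p → ℝ :=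
  Sum.elim (fun q => u (k - l + (q.1 : ℕ)) q.2) (fun q => y (k - l + (q.1 : ℕ)) q.2)

/-- Key lemma: the stacked extended state obeys the `(Ã, B̃)` dynamics. -/
lemma stack_rec (A : Matrix (Fin n) (Fin n) ℝ) (B : Matrix (Fin n) (Fin m) ℝ)
    (C : Matrix (Fin p) (Fin n) ℝ) (D0 : Matrix (Fin p) (Fin m) ℝ)
    (F : Fin l → Matrix (Fin p) (Fin p) ℝ) (G : Fin l → Matrix (Fin p) (Fin m) ℝ)
    (hrec : ∀ (x : ℕ → Fin n → ℝ) (u : ℕ → Fin m → ℝ),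
      (∀ k, x (k + 1) = A.mulVec (x k) + B.mulVec (u k)) →
      ∀ k, C.mulVec (x (k + l)) + D0.mulVec (u (k + l)) =
        (∑ j : Fin l, (F j).mulVec (C.mulVec (x (k + (j : ℕ))) + D0.mulVec (u (k + (j : ℕ)))))
        + (∑ j : Fin l, (G j).mulVec (u (k + (j : ℕ))))
        + D0.mulVec (u (k + l)))
    (x0 : Fin n → ℝ) (u : ℕ → Fin m → ℝ) (k : ℕ) (hk : l ≤ k) :
    stack l u (fun s => C.mulVec (traj A B x0 u s) + D0.mulVec (u s)) (k + 1)
      = (Atil l m p F G).mulVec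
          (stack l u (fun s => C.mulVec (traj A B x0 u s) + D0.mulVec (u s)) k)
        + (Btil l m p D0).mulVec (u k) := by
  funext t
  rcases t with ⟨i, a⟩ | ⟨i, c⟩
  · rw [Pi.add_apply, atil_mulVec_inl, btil_mulVec_inl]
    by_cases h : (i : ℕ) + 1 < l
    · have hne : (i : ℕ) ≠ l - 1 := by omega
      rw [dif_pos h, if_neg hne, add_zero]
      show u (k + 1 - l + (i : ℕ)) a = u (k - l + ((i : ℕ) + 1)) a
      rw [show k + 1 - l + (i : ℕ) = k - l + ((i : ℕ) + 1) from by omega]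
    · have hi : (i : ℕ) = l - 1 := by omega
      rw [dif_neg h, if_pos hi, zero_add]
      show u (k + 1 - l + (i : ℕ)) a = u k a
      rw [show k + 1 - l + (i : ℕ) = k from by omega]
  · rw [Pi.add_apply, btil_mulVec_inr]
    by_cases h : (i : ℕ) = l - 1
    · rw [atil_mulVec_inr_bot _ _ _ h, if_pos h]
      show (C.mulVec (traj A B x0 u (k + 1 - l + (i : ℕ)))
          + D0.mulVec (u (k + 1 - l + (i : ℕ)))) c = _
      rw [show k + 1 - l + (i : ℕ) = k from by omega]
      have harx := hrec (traj A B x0 u) u (fun s => traj_dyn A B x0 u s) (k - l)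
      rw [show k - l + l = k from by omega] at harx
      rw [congrFun harx c]
      have hstl : ∀ j : Fin l,
          (fun b => stack l u (fun s => C.mulVec (traj A B x0 u s) + D0.mulVec (u s)) k
            (Sum.inl (j, b))) = u (k - l + (j : ℕ)) := fun j => rfl
      have hstr : ∀ j : Fin l,
          (fun c' => stack l u (fun s => C.mulVec (traj A B x0 u s) + D0.mulVec (u s)) k
            (Sum.inr (j, c')))
          = C.mulVec (traj A B x0 u (k - l + (j : ℕ))) + D0.mulVec (u (k - l + (j : ℕ))) :=
        fun j => rfl
      simp only [hstl, hstr, Pi.add_apply, Finset.sum_apply]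
      ring
    · have h2 : (i : ℕ) + 1 < l := by omega
      rw [atil_mulVec_inr_shift _ _ _ h2 h, if_neg h, add_zero]
      show (C.mulVec (traj A B x0 u (k + 1 - l + (i : ℕ)))
          + D0.mulVec (u (k + 1 - l + (i : ℕ)))) c
        = (C.mulVec (traj A B x0 u (k - l + ((i : ℕ) + 1)))
          + D0.mulVec (u (k - l + ((i : ℕ) + 1)))) c
      rw [show k + 1 - l + (i : ℕ) = k - l + ((i : ℕ) + 1) from by omega]

/-- Pad a finite input window with zeros. -/
def vpad (l : ℕ) (v : Fin l → Fin m → ℝ) : ℕ → Fin m → ℝ :=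
  fun k => if h : k < l then v ⟨k, h⟩ else 0

lemma vpad_add (v v' : Fin l → Fin m → ℝ) :
    vpad l (v + v') = fun j => vpad l v j + vpad l v' j := by
  funext j
  by_cases h : j < l
  · simp [vpad, h]
  · simp [vpad, h]

lemma vpad_smul (r : ℝ) (v : Fin l → Fin m → ℝ) :
    vpad l (r • v) = fun j => r • vpad l v j := by
  funext j
  by_cases h : j < l
  · simp [vpad, h]
  · simp [vpad, h]

lemma vpad_zero : vpad l (0 : Fin l → Fin m → ℝ) = fun _ => 0 := by
  funext j
  by_cases h : j < l
  · simp [vpad, h]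
  · simp [vpad, h]

/-- Shift an input window left by one, padding with zero. -/
def shiftv (l : ℕ) (v : Fin l → Fin m → ℝ) : Fin l → Fin m → ℝ :=
  fun i => vpad l v ((i : ℕ) + 1)

lemma vpad_shiftv (v : Fin l → Fin m → ℝ) :
    vpad l (shiftv l v) = fun j => vpad l v (j + 1) := by
  funext j
  by_cases h : j < l
  · simp [vpad, shiftv, h]
  · have h2 : ¬(j + 1 < l) := by omega
    simp [vpad, h, h2]

/-- The extended state generated by initial state `x` and an input window `v`. -/
def Lfun (A : Matrix (Fin n) (Fin n) ℝ) (B : Matrix (Fin n) (Fin m) ℝ)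
    (C : Matrix (Fin p) (Fin n) ℝ) (D0 : Matrix (Fin p) (Fin m) ℝ) (l : ℕ)
    (x : Fin n → ℝ) (v : Fin l → Fin m → ℝ) : ExtIdx l m p → ℝ :=
  stack l (vpad l v)
    (fun s => C.mulVec (traj A B x (vpad l v) s) + D0.mulVec (vpad l v s)) l

variable (A : Matrix (Fin n) (Fin n) ℝ) (B : Matrix (Fin n) (Fin m) ℝ)
  (C : Matrix (Fin p) (Fin n) ℝ) (D0 : Matrix (Fin p) (Fin m) ℝ)

lemma Lfun_add (x x' : Fin n → ℝ) (v v' : Fin l → Fin m → ℝ) :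
    Lfun A B C D0 l (x + x') (v + v') = Lfun A B C D0 l x v + Lfun A B C D0 l x' v' := by
  funext t
  rcases t with ⟨i, a⟩ | ⟨i, c⟩
  · show vpad l (v + v') (l - l + (i : ℕ)) a
      = vpad l v (l - l + (i : ℕ)) a + vpad l v' (l - l + (i : ℕ)) a
    rw [vpad_add]
    rfl
  · show (C.mulVec (traj A B (x + x') (vpad l (v + v')) (l - l + (i : ℕ)))
        + D0.mulVec (vpad l (v + v') (l - l + (i : ℕ)))) c = _
    rw [vpad_add, traj_add]
    show (C.mulVec (traj A B x (vpad l v) (l - l + (i : ℕ))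
          + traj A B x' (vpad l v') (l - l + (i : ℕ)))
        + D0.mulVec (vpad l v (l - l + (i : ℕ)) + vpad l v' (l - l + (i : ℕ)))) c
      = (C.mulVec (traj A B x (vpad l v) (l - l + (i : ℕ)))
          + D0.mulVec (vpad l v (l - l + (i : ℕ)))) c
        + (C.mulVec (traj A B x' (vpad l v') (l - l + (i : ℕ)))
          + D0.mulVec (vpad l v' (l - l + (i : ℕ)))) c
    simp [Matrix.mulVec_add]
    ring

lemma Lfun_smul (r : ℝ) (x : Fin n → ℝ) (v : Fin l → Fin m → ℝ) :
    Lfun A B C D0 l (r • x) (r • v) = r • Lfun A B C D0 l x v := by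
  funext t
  rcases t with ⟨i, a⟩ | ⟨i, c⟩
  · show vpad l (r • v) (l - l + (i : ℕ)) a = r • vpad l v (l - l + (i : ℕ)) a
    rw [vpad_smul]
    rfl
  · show (C.mulVec (traj A B (r • x) (vpad l (r • v)) (l - l + (i : ℕ)))
        + D0.mulVec (vpad l (r • v) (l - l + (i : ℕ)))) c = _
    rw [vpad_smul, traj_smul]
    show (C.mulVec (r • traj A B x (vpad l v) (l - l + (i : ℕ)))
        + D0.mulVec (r • vpad l v (l - l + (i : ℕ)))) c
      = r • (C.mulVec (traj A B x (vpad l v) (l - l + (i : ℕ)))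
          + D0.mulVec (vpad l v (l - l + (i : ℕ)))) c
    simp [Matrix.mulVec_smul]
    ring

/-- `Lfun` as a linear map. -/
noncomputable def Lmap (l : ℕ) :
    ((Fin n → ℝ) × (Fin l → Fin m → ℝ)) →ₗ[ℝ] (ExtIdx l m p → ℝ) where
  toFun z := Lfun A B C D0 l z.1 z.2
  map_add' z w := Lfun_add A B C D0 z.1 w.1 z.2 w.2
  map_smul' r z := Lfun_smul A B C D0 r z.1 z.2

lemma traj_pow (x : Fin n → ℝ) (k : ℕ) :
    traj A B x (fun _ => 0) k = (A ^ k).mulVec x := by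
  induction k with
  | zero => simp [traj]
  | succ k ih =>
    rw [traj_dyn, ih, Matrix.mulVec_zero, add_zero, Matrix.mulVec_mulVec, ← pow_succ']

lemma btil_eq_Lfun (u0 : Fin m → ℝ) :
    (Btil l m p D0).mulVec u0
      = Lfun A B C D0 l 0 (fun i => if (i : ℕ) = l - 1 then u0 else 0) := by
  funext t
  have hvp : ∀ j : ℕ, vpad l (fun i : Fin l => if (i : ℕ) = l - 1 then u0 else 0) j
      = if j = l - 1 ∧ j < l then u0 else 0 := by
    intro j
    by_cases h : j < l
    · by_cases h2 : j = l - 1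
      · simp [vpad, h, h2]
      · simp [vpad, h, h2]
    · have : ¬(j = l - 1 ∧ j < l) := fun hc => h hc.2
      simp [vpad, h, this]
  rcases t with ⟨i, a⟩ | ⟨i, c⟩
  · rw [btil_mulVec_inl]
    show _ = vpad l (fun i : Fin l => if (i : ℕ) = l - 1 then u0 else 0) (l - l + (i : ℕ)) a
    rw [hvp]
    have hlt := i.isLt
    by_cases hc : (i : ℕ) = l - 1
    · rw [if_pos hc, if_pos ⟨by omega, by omega⟩]
    · rw [if_neg hc, if_neg (by rintro ⟨h1, h2⟩; omega)]
      rfl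
  · rw [btil_mulVec_inr]
    show _ = (C.mulVec (traj A B 0
          (vpad l (fun i : Fin l => if (i : ℕ) = l - 1 then u0 else 0)) (l - l + (i : ℕ)))
        + D0.mulVec (vpad l (fun i : Fin l => if (i : ℕ) = l - 1 then u0 else 0)
            (l - l + (i : ℕ)))) c
    have hlt := i.isLt
    have hxz : traj A B 0
        (vpad l (fun i : Fin l => if (i : ℕ) = l - 1 then u0 else 0)) (l - l + (i : ℕ)) = 0 := by
      apply traj_zero
      intro j hj
      rw [hvp, if_neg (by rintro ⟨h1, h2⟩; omega)]
    rw [hxz, Matrix.mulVec_zero, hvp]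
    by_cases hc : (i : ℕ) = l - 1
    · rw [if_pos hc, if_pos ⟨by omega, by omega⟩]
      simp
    · rw [if_neg hc, if_neg (by rintro ⟨h1, h2⟩; omega)]
      simp

lemma atil_mulVec_Lfun (F : Fin l → Matrix (Fin p) (Fin p) ℝ)
    (G : Fin l → Matrix (Fin p) (Fin m) ℝ)
    (hrec : ∀ (x : ℕ → Fin n → ℝ) (u : ℕ → Fin m → ℝ),
      (∀ k, x (k + 1) = A.mulVec (x k) + B.mulVec (u k)) →
      ∀ k, C.mulVec (x (k + l)) + D0.mulVec (u (k + l)) =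
        (∑ j : Fin l, (F j).mulVec (C.mulVec (x (k + (j : ℕ))) + D0.mulVec (u (k + (j : ℕ)))))
        + (∑ j : Fin l, (G j).mulVec (u (k + (j : ℕ))))
        + D0.mulVec (u (k + l)))
    (x : Fin n → ℝ) (v : Fin l → Fin m → ℝ) :
    (Atil l m p F G).mulVec (Lfun A B C D0 l x v)
      = Lfun A B C D0 l (A.mulVec x + B.mulVec (vpad l v 0)) (shiftv l v) := by
  have h1 := stack_rec A B C D0 F G hrec x (vpad l v) l le_rfl
  have hu : vpad l v l = 0 := by simp [vpad]
  rw [hu, Matrix.mulVec_zero, add_zero] at h1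
  have h2 : (Atil l m p F G).mulVec (Lfun A B C D0 l x v)
      = stack l (vpad l v)
          (fun s => C.mulVec (traj A B x (vpad l v) s) + D0.mulVec (vpad l v s)) (l + 1) :=
    h1.symm
  rw [h2]
  have hfun : (fun j => vpad l v (j + 1)) = (fun j : ℕ => vpad l v (1 + j)) := by
    funext j; rw [Nat.add_comm]
  have hx1 : traj A B x (vpad l v) 1 = A.mulVec x + B.mulVec (vpad l v 0) := rfl
  have htr : ∀ k, traj A B (A.mulVec x + B.mulVec (vpad l v 0)) (fun j => vpad l v (j + 1)) k
      = traj A B x (vpad l v) (1 + k) := by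
    intro k
    rw [traj_shift A B x (vpad l v) 1 k, hx1, hfun]
  funext t
  rcases t with ⟨i, a⟩ | ⟨i, c⟩
  · show vpad l v (l + 1 - l + (i : ℕ)) a = vpad l (shiftv l v) (l - l + (i : ℕ)) a
    rw [vpad_shiftv]
    show vpad l v (l + 1 - l + (i : ℕ)) a = vpad l v ((l - l + (i : ℕ)) + 1) a
    rw [show l + 1 - l + (i : ℕ) = (l - l + (i : ℕ)) + 1 from by omega]
  · show (C.mulVec (traj A B x (vpad l v) (l + 1 - l + (i : ℕ)))
        + D0.mulVec (vpad l v (l + 1 - l + (i : ℕ)))) c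
      = (C.mulVec (traj A B (A.mulVec x + B.mulVec (vpad l v 0)) (vpad l (shiftv l v))
            (l - l + (i : ℕ)))
        + D0.mulVec (vpad l (shiftv l v) (l - l + (i : ℕ)))) c
    rw [vpad_shiftv, htr (l - l + (i : ℕ)),
      show 1 + (l - l + (i : ℕ)) = l + 1 - l + (i : ℕ) from by omega]
    show _ = (C.mulVec (traj A B x (vpad l v) (l + 1 - l + (i : ℕ)))
        + D0.mulVec (vpad l v ((l - l + (i : ℕ)) + 1))) c
    rw [show (l - l + (i : ℕ)) + 1 = l + 1 - l + (i : ℕ) from by omega]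

section Generic

variable {ι : Type*} [Fintype ι] [DecidableEq ι]

/-- Controllability matrix with horizon `d`. -/
noncomputable def kmat (Ah : Matrix ι ι ℝ) (Bh : Matrix ι (Fin m) ℝ) (d : ℕ) :
    Matrix ι (Fin d × Fin m) ℝ :=
  Matrix.of fun i q => ((Ah ^ (q.1 : ℕ)) * Bh) i q.2

lemma kmat_mulVec (Ah : Matrix ι ι ℝ) (Bh : Matrix ι (Fin m) ℝ) (d : ℕ)
    (w : Fin d × Fin m → ℝ) :
    (kmat Ah Bh d).mulVec w
      = ∑ q : Fin d, ((Ah ^ (q : ℕ)) * Bh).mulVec (fun a => w (q, a)) := by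
  funext i
  rw [mulVec_apply, Fintype.sum_prod_type, Finset.sum_apply]
  refine Finset.sum_congr rfl fun q _ => ?_
  rw [mulVec_apply]
  rfl

lemma col_eq_kmat_mulVec (Ah : Matrix ι ι ℝ) (Bh : Matrix ι (Fin m) ℝ) (d : ℕ)
    (i : Fin d) (u0 : Fin m → ℝ) :
    ((Ah ^ (i : ℕ)) * Bh).mulVec u0
      = (kmat Ah Bh d).mulVec (fun qa => if qa.1 = i then u0 qa.2 else 0) := by
  rw [kmat_mulVec, Finset.sum_eq_single i]
  · simp
  · intro q _ hq
    have : (fun a => if q = i then u0 a else 0) = (fun _ => (0 : ℝ)) := by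
      funext a; rw [if_neg hq]
    rw [this]
    have hz : ((Ah ^ (q : ℕ)) * Bh).mulVec (fun _ => (0 : ℝ)) = 0 := by
      rw [show (fun _ => (0 : ℝ)) = (0 : Fin m → ℝ) from rfl, Matrix.mulVec_zero]
    exact hz
  · intro habs; exact absurd (Finset.mem_univ _) habs

lemma pow_mul_mulVec_mem (Ah : Matrix ι ι ℝ) (Bh : Matrix ι (Fin m) ℝ) (q : ℕ)
    (u0 : Fin m → ℝ) :
    ((Ah ^ q) * Bh).mulVec u0
      ∈ LinearMap.range (kmat Ah Bh (Fintype.card ι)).mulVecLin := by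
  set d := Fintype.card ι with hd
  by_cases hd0 : d = 0
  · have hie : IsEmpty ι := Fintype.card_eq_zero_iff.mp hd0
    have hz : ((Ah ^ q) * Bh).mulVec u0 = 0 := funext fun i => (hie.false i).elim
    rw [hz]; exact zero_mem _
  · have hdpos : 0 < d := Nat.pos_of_ne_zero hd0
    have hch := Matrix.pow_eq_aeval_mod_charpoly Ah q
    set r := (Polynomial.X ^ q) %ₘ Ah.charpoly with hr
    have hdeg : r.natDegree < d := by
      by_cases hr0 : r = 0
      · rw [hr0]; simpa using hdpos
      · rw [hd, ← Matrix.charpoly_natDegree_eq_dim Ah]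
        exact Polynomial.natDegree_lt_natDegree hr0
          (Polynomial.degree_modByMonic_lt _ (Matrix.charpoly_monic Ah))
    have hexp : Ah ^ q = ∑ i ∈ Finset.range d, r.coeff i • Ah ^ i := by
      rw [hch, Polynomial.aeval_eq_sum_range' hdeg]
    rw [hexp, Matrix.sum_mul]
    have hmv : (∑ i ∈ Finset.range d, (r.coeff i • Ah ^ i) * Bh).mulVec u0
        = ∑ i ∈ Finset.range d, r.coeff i • (((Ah ^ i) * Bh).mulVec u0) := by
      funext j
      rw [mulVec_apply, Finset.sum_apply]
      simp only [Finset.sum_apply, Matrix.sum_apply, Finset.sum_mul]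
      rw [Finset.sum_comm]
      refine Finset.sum_congr rfl fun i _ => ?_
      rw [Pi.smul_apply, mulVec_apply, Finset.smul_sum]
      refine Finset.sum_congr rfl fun b _ => ?_
      simp [Matrix.smul_apply, smul_eq_mul]
      ring
    rw [hmv]
    refine Submodule.sum_mem _ fun i hi => Submodule.smul_mem _ _ ?_
    simp only [Finset.mem_range] at hi
    rw [show Ah ^ i = Ah ^ ((⟨i, hi⟩ : Fin d) : ℕ) from rfl,
      col_eq_kmat_mulVec Ah Bh d ⟨i, hi⟩ u0]
    exact ⟨_, rfl⟩

lemma step_closed (Ah : Matrix ι ι ℝ) (Bh : Matrix ι (Fin m) ℝ)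
    {ξ : ι → ℝ} (hmem : ξ ∈ LinearMap.range (kmat Ah Bh (Fintype.card ι)).mulVecLin)
    (u0 : Fin m → ℝ) :
    Ah.mulVec ξ + Bh.mulVec u0
      ∈ LinearMap.range (kmat Ah Bh (Fintype.card ι)).mulVecLin := by
  obtain ⟨w, rfl⟩ := hmem
  have h1 : Ah.mulVec ((kmat Ah Bh (Fintype.card ι)).mulVecLin w)
      = ∑ q : Fin (Fintype.card ι), ((Ah ^ ((q : ℕ) + 1)) * Bh).mulVec (fun a => w (q, a)) := by
    rw [Matrix.mulVecLin_apply, kmat_mulVec]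
    simp only [← Matrix.mulVecLin_apply, map_sum]
    refine Finset.sum_congr rfl fun q _ => ?_
    simp only [Matrix.mulVecLin_apply, Matrix.mulVec_mulVec]
    rw [pow_succ', Matrix.mul_assoc]
  rw [h1]
  refine Submodule.add_mem _ (Submodule.sum_mem _ fun q _ => pow_mul_mulVec_mem Ah Bh _ _) ?_
  have h0 := pow_mul_mulVec_mem Ah Bh 0 u0
  rwa [pow_zero, Matrix.one_mul] at h0

lemma rank_eq_card_iff_top {κ : Type*} [Fintype κ] (M : Matrix ι κ ℝ) :
    M.rank = Fintype.card ι ↔ LinearMap.range M.mulVecLin = ⊤ := by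
  constructor
  · intro h
    apply Submodule.eq_top_of_finrank_eq
    rw [Matrix.rank] at h
    rw [h, Module.finrank_pi]
  · intro h
    rw [Matrix.rank, h, finrank_top, Module.finrank_pi]

end Generic

lemma traj_reach (d : ℕ) (w : Fin d × Fin m → ℝ) :
    traj A B 0 (fun j a => if h : d - 1 - j < d then w (⟨d - 1 - j, h⟩, a) else 0) d
      = (kmat A B d).mulVec w := by
  rw [traj_sum, kmat_mulVec, Finset.sum_range,
    ← Equiv.sum_comp (Fin.revPerm) (fun q : Fin d => ((A ^ (q : ℕ)) * B).mulVec (fun a => w (q, a)))]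
  refine Finset.sum_congr rfl fun j _ => ?_
  have hj := j.isLt
  have hrev : ((Fin.revPerm j : Fin d) : ℕ) = d - 1 - (j : ℕ) := by
    have := Fin.val_rev j
    show (j.rev : ℕ) = d - 1 - (j : ℕ)
    omega
  have hu : (fun a => if h : d - 1 - (j : ℕ) < d then w (⟨d - 1 - (j : ℕ), h⟩, a) else 0)
      = fun a => w (Fin.revPerm j, a) := by
    funext a
    rw [dif_pos (by omega)]
    congr 2
    apply Fin.ext
    simp only [hrev]
  rw [hu, hrev, ← Matrix.mulVec_mulVec]

lemma pow_btil_mem_range (F : Fin l → Matrix (Fin p) (Fin p) ℝ)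
    (G : Fin l → Matrix (Fin p) (Fin m) ℝ)
    (hrec : ∀ (x : ℕ → Fin n → ℝ) (u : ℕ → Fin m → ℝ),
      (∀ k, x (k + 1) = A.mulVec (x k) + B.mulVec (u k)) →
      ∀ k, C.mulVec (x (k + l)) + D0.mulVec (u (k + l)) =
        (∑ j : Fin l, (F j).mulVec (C.mulVec (x (k + (j : ℕ))) + D0.mulVec (u (k + (j : ℕ)))))
        + (∑ j : Fin l, (G j).mulVec (u (k + (j : ℕ))))
        + D0.mulVec (u (k + l))) :
    ∀ (q : ℕ) (u0 : Fin m → ℝ),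
      (((Atil l m p F G) ^ q) * Btil l m p D0).mulVec u0
        ∈ LinearMap.range (Lmap A B C D0 l) := by
  intro q
  induction q with
  | zero =>
    intro u0
    rw [pow_zero, Matrix.one_mul]
    exact ⟨(0, fun i => if (i : ℕ) = l - 1 then u0 else 0), (btil_eq_Lfun A B C D0 u0).symm⟩
  | succ q ih =>
    intro u0
    rw [pow_succ', Matrix.mul_assoc, ← Matrix.mulVec_mulVec]
    obtain ⟨z, hz⟩ := ih u0
    rw [← hz]
    show (Atil l m p F G).mulVec (Lfun A B C D0 l z.1 z.2) ∈ _
    rw [atil_mulVec_Lfun A B C D0 F G hrec z.1 z.2]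
    exact ⟨(_, _), rfl⟩

lemma Lfun_x_zero_inl (x : Fin n → ℝ) (i : Fin l) (a : Fin m) :
    Lfun A B C D0 l x 0 (Sum.inl (i, a)) = 0 := by
  show vpad l 0 (l - l + (i : ℕ)) a = 0
  rw [vpad_zero]
  rfl

lemma Lfun_x_zero_inr (x : Fin n → ℝ) (q : Fin l × Fin p) :
    Lfun A B C D0 l x 0 (Sum.inr q) = (obsvMat A C l).mulVec x q := by
  obtain ⟨i, c⟩ := q
  show (C.mulVec (traj A B x (vpad l 0) (l - l + (i : ℕ)))
      + D0.mulVec (vpad l 0 (l - l + (i : ℕ)))) c = _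
  rw [vpad_zero, traj_pow, Matrix.mulVec_mulVec]
  show ((C * A ^ (l - l + (i : ℕ))).mulVec x + D0.mulVec 0) c = (obsvMat A C l).mulVec x (i, c)
  rw [Matrix.mulVec_zero, show l - l + (i : ℕ) = (i : ℕ) from by omega]
  rw [Pi.add_apply, Pi.zero_apply, add_zero]
  rfl

lemma card_ext : Fintype.card (ExtIdx l m p) = l * m + l * p := by
  simp [Fintype.card_sum, Fintype.card_prod]

lemma finrank_dom : Module.finrank ℝ ((Fin n → ℝ) × (Fin l → Fin m → ℝ)) = n + l * m := by
  rw [Module.finrank_prod, Module.finrank_pi]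
  congr 1
  · simp
  · rw [Module.finrank_pi_fintype]
    simp [Module.finrank_pi, Finset.sum_const, Fintype.card_fin]

lemma forward_dir (F : Fin l → Matrix (Fin p) (Fin p) ℝ)
    (G : Fin l → Matrix (Fin p) (Fin m) ℝ)
    (hobs : (obsvMat A C l).rank = n)
    (hrec : ∀ (x : ℕ → Fin n → ℝ) (u : ℕ → Fin m → ℝ),
      (∀ k, x (k + 1) = A.mulVec (x k) + B.mulVec (u k)) →
      ∀ k, C.mulVec (x (k + l)) + D0.mulVec (u (k + l)) =
        (∑ j : Fin l, (F j).mulVec (C.mulVec (x (k + (j : ℕ))) + D0.mulVec (u (k + (j : ℕ)))))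
        + (∑ j : Fin l, (G j).mulVec (u (k + (j : ℕ))))
        + D0.mulVec (u (k + l)))
    (h : Controllable (Atil l m p F G) (Btil l m p D0)) : p * l = n := by
  classical
  have h' : (kmat (Atil l m p F G) (Btil l m p D0) (Fintype.card (ExtIdx l m p))).rank
      = Fintype.card (ExtIdx l m p) := h
  have hsub : LinearMap.range
        (kmat (Atil l m p F G) (Btil l m p D0) (Fintype.card (ExtIdx l m p))).mulVecLin
      ≤ LinearMap.range (Lmap A B C D0 l) := by
    rintro ξ ⟨w, rfl⟩
    rw [Matrix.mulVecLin_apply, kmat_mulVec]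
    exact Submodule.sum_mem _ fun q _ =>
      pow_btil_mem_range A B C D0 F G hrec (q : ℕ) (fun a => w (q, a))
  have hle1 : (kmat (Atil l m p F G) (Btil l m p D0) (Fintype.card (ExtIdx l m p))).rank
      ≤ Module.finrank ℝ (LinearMap.range (Lmap A B C D0 l)) :=
    Submodule.finrank_mono hsub
  have hle2 : Module.finrank ℝ (LinearMap.range (Lmap A B C D0 l)) ≤ n + l * m :=
    (LinearMap.finrank_range_le _).trans_eq finrank_dom
  have hub : l * m + l * p ≤ n + l * m := by
    rw [← card_ext (l := l) (m := m) (p := p), ← h']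
    exact hle1.trans hle2
  have hlp : l * p ≤ n := by omega
  have hobs' : n ≤ l * p := by
    have := (obsvMat A C l).rank_le_card_height
    rw [hobs] at this
    simpa [Fintype.card_prod] using this
  rw [Nat.mul_comm]
  omega

lemma reverse_dir (hl : 0 < l) (F : Fin l → Matrix (Fin p) (Fin p) ℝ)
    (G : Fin l → Matrix (Fin p) (Fin m) ℝ)
    (hctrb : Controllable A B)
    (hobs : (obsvMat A C l).rank = n)
    (hrec : ∀ (x : ℕ → Fin n → ℝ) (u : ℕ → Fin m → ℝ),
      (∀ k, x (k + 1) = A.mulVec (x k) + B.mulVec (u k)) →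
      ∀ k, C.mulVec (x (k + l)) + D0.mulVec (u (k + l)) =
        (∑ j : Fin l, (F j).mulVec (C.mulVec (x (k + (j : ℕ))) + D0.mulVec (u (k + (j : ℕ)))))
        + (∑ j : Fin l, (G j).mulVec (u (k + (j : ℕ))))
        + D0.mulVec (u (k + l)))
    (hn : p * l = n) : Controllable (Atil l m p F G) (Btil l m p D0) := by
  classical
  show (kmat (Atil l m p F G) (Btil l m p D0) (Fintype.card (ExtIdx l m p))).rank
      = Fintype.card (ExtIdx l m p)
  apply (rank_eq_card_iff_top _).mpr
  -- controllability of (A, B) gives surjectivity of the Kalman matrix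
  have hsurK : LinearMap.range (kmat A B (Fintype.card (Fin n))).mulVecLin = ⊤ :=
    (rank_eq_card_iff_top _).mp hctrb
  -- Step A: everything of the form `Lfun x v` is reachable
  have stepA : ∀ (x : Fin n → ℝ) (v : Fin l → Fin m → ℝ),
      Lfun A B C D0 l x v ∈ LinearMap.range
        (kmat (Atil l m p F G) (Btil l m p D0) (Fintype.card (ExtIdx l m p))).mulVecLin := by
    intro x v
    set d0 := Fintype.card (Fin n) with hd0
    obtain ⟨w, hw⟩ : ∃ w, (kmat A B d0).mulVecLin w = x := by
      have : x ∈ LinearMap.range (kmat A B d0).mulVecLin := by rw [hsurK]; trivial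
      exact this
    set ubig : ℕ → Fin m → ℝ := fun k =>
      if k < d0 then (fun j a => if h : d0 - 1 - j < d0 then w (⟨d0 - 1 - j, h⟩, a) else 0) k
      else vpad l v (k - d0) with hubig
    have hagree : ∀ j, j < d0 → ubig j
        = (fun j a => if h : d0 - 1 - j < d0 then w (⟨d0 - 1 - j, h⟩, a) else 0) j :=
      fun j hj => by simp only [hubig, if_pos hj]
    have hx : traj A B 0 ubig d0 = x := by
      rw [traj_congr A B 0 d0 hagree, traj_reach]
      exact hw
    set U : ℕ → Fin m → ℝ := fun k => if k < l then 0 else ubig (k - l) with hU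
    have hU0 : ∀ j, j < l → U j = 0 := fun j hj => by simp only [hU, if_pos hj]
    have hUge : ∀ j, ¬(j < l) → U j = ubig (j - l) := fun j hj => by simp only [hU, if_neg hj]
    have hstack0 : stack l U
        (fun s => C.mulVec (traj A B 0 U s) + D0.mulVec (U s)) l = 0 := by
      funext t
      rcases t with ⟨i, a⟩ | ⟨i, c⟩
      · show U (l - l + (i : ℕ)) a = 0
        rw [show l - l + (i : ℕ) = (i : ℕ) from by omega, hU0 _ i.isLt]
        rfl
      · show (C.mulVec (traj A B 0 U (l - l + (i : ℕ))) + D0.mulVec (U (l - l + (i : ℕ)))) c = 0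
        rw [show l - l + (i : ℕ) = (i : ℕ) from by omega,
          traj_zero A B U _ (fun j hj => hU0 j (hj.trans i.isLt)), hU0 _ i.isLt]
        simp
    have hmem : ∀ t, stack l U
        (fun s => C.mulVec (traj A B 0 U s) + D0.mulVec (U s)) (l + t)
        ∈ LinearMap.range
          (kmat (Atil l m p F G) (Btil l m p D0) (Fintype.card (ExtIdx l m p))).mulVecLin := by
      intro t
      induction t with
      | zero => rw [Nat.add_zero, hstack0]; exact zero_mem _
      | succ t ih =>
        rw [show l + (t + 1) = (l + t) + 1 from rfl,
          stack_rec A B C D0 F G hrec 0 U (l + t) (Nat.le_add_right l t)]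
        exact step_closed _ _ ih _
    have hXshift : ∀ s, traj A B 0 U (l + s) = traj A B 0 ubig s := by
      intro s
      rw [traj_shift A B 0 U l s, traj_zero A B U l hU0,
        show (fun j => U (l + j)) = ubig from funext fun j => by
          rw [hUge (l + j) (by omega), show l + j - l = j from by omega]]
    have hXx : ∀ s, traj A B 0 ubig (d0 + s) = traj A B x (vpad l v) s := by
      intro s
      rw [traj_shift A B 0 ubig d0 s, hx,
        show (fun j => ubig (d0 + j)) = vpad l v from funext fun j => by
          simp only [hubig, if_neg (show ¬(d0 + j < d0) from by omega),
            show d0 + j - d0 = j from by omega]]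
    have hfinal : stack l U
        (fun s => C.mulVec (traj A B 0 U s) + D0.mulVec (U s)) (l + (d0 + l))
          = Lfun A B C D0 l x v := by
      funext t
      have hUval : ∀ i : Fin l, U (d0 + l + (i : ℕ)) = vpad l v (i : ℕ) := by
        intro i
        rw [hUge _ (by omega), show d0 + l + (i : ℕ) - l = d0 + (i : ℕ) from by omega,
          hubig]
        simp only [if_neg (show ¬(d0 + (i : ℕ) < d0) from by omega),
          show d0 + (i : ℕ) - d0 = (i : ℕ) from by omega]
      rcases t with ⟨i, a⟩ | ⟨i, c⟩
      · show U (l + (d0 + l) - l + (i : ℕ)) a = vpad l v (l - l + (i : ℕ)) a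
        rw [show l + (d0 + l) - l + (i : ℕ) = d0 + l + (i : ℕ) from by omega, hUval i,
          show l - l + (i : ℕ) = (i : ℕ) from by omega]
      · show (C.mulVec (traj A B 0 U (l + (d0 + l) - l + (i : ℕ)))
            + D0.mulVec (U (l + (d0 + l) - l + (i : ℕ)))) c
          = (C.mulVec (traj A B x (vpad l v) (l - l + (i : ℕ)))
            + D0.mulVec (vpad l v (l - l + (i : ℕ)))) c
        rw [show l + (d0 + l) - l + (i : ℕ) = d0 + l + (i : ℕ) from by omega, hUval i,
          show d0 + l + (i : ℕ) = l + (d0 + (i : ℕ)) from by omega,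
          hXshift (d0 + (i : ℕ)), hXx (i : ℕ),
          show l - l + (i : ℕ) = (i : ℕ) from by omega]
    rw [← hfinal]
    exact hmem (d0 + l)
  -- Step B: every extended vector is of the form `Lfun x v`
  rw [eq_top_iff]
  rintro ξ -
  set v : Fin l → Fin m → ℝ := fun i a => ξ (Sum.inl (i, a)) with hv
  have hcard : Fintype.card (Fin l × Fin p) = n := by
    rw [Fintype.card_prod, Fintype.card_fin, Fintype.card_fin, Nat.mul_comm]
    exact hn
  have hΦtop : LinearMap.range (obsvMat A C l).mulVecLin = ⊤ :=
    (rank_eq_card_iff_top _).mp (by rw [hcard]; exact hobs)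
  obtain ⟨x, hxΦ⟩ : ∃ x, (obsvMat A C l).mulVecLin x
      = fun q => ξ (Sum.inr q) - Lfun A B C D0 l 0 v (Sum.inr q) := by
    have : (fun q => ξ (Sum.inr q) - Lfun A B C D0 l 0 v (Sum.inr q))
        ∈ LinearMap.range (obsvMat A C l).mulVecLin := by rw [hΦtop]; trivial
    exact this
  have hsplit : Lfun A B C D0 l x v = Lfun A B C D0 l x 0 + Lfun A B C D0 l 0 v := by
    have h := Lfun_add A B C D0 x 0 (0 : Fin l → Fin m → ℝ) v
    rw [add_zero, zero_add] at h
    exact h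
  have hξ : ξ = Lfun A B C D0 l x v := by
    funext t
    rcases t with ⟨i, a⟩ | ⟨i, c⟩
    · rw [hsplit, Pi.add_apply, Lfun_x_zero_inl, zero_add]
      show ξ (Sum.inl (i, a)) = vpad l v (l - l + (i : ℕ)) a
      rw [show l - l + (i : ℕ) = (i : ℕ) from by omega]
      simp [vpad, i.isLt, hv]
    · rw [hsplit, Pi.add_apply, Lfun_x_zero_inr]
      have := congrFun hxΦ (i, c)
      rw [Matrix.mulVecLin_apply] at this
      rw [this]
      ring
  rw [hξ]
  exact stepA x v

end ECIS


/-- Suppose `(A,B)` is controllable, `(A,C)` is observable with lag at most `l`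
(`rank Φ_l = n`), and the extended state of the past `l` inputs/outputs obeys the
dynamics `(Ã, B̃)` induced by the ARX recursion (which is consistent with every trajectory
of the original system). Then `(Ã, B̃)` is controllable iff `Φ_l` is square, i.e. `pl = n`. -/
theorem extended_controllability_iff_square {n m p l : ℕ} (hl : 0 < l)
    (A : Matrix (Fin n) (Fin n) ℝ) (B : Matrix (Fin n) (Fin m) ℝ)
    (C : Matrix (Fin p) (Fin n) ℝ) (D0 : Matrix (Fin p) (Fin m) ℝ)
    (F : Fin l → Matrix (Fin p) (Fin p) ℝ) (G : Fin l → Matrix (Fin p) (Fin m) ℝ)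
    (hctrb : Controllable A B)
    (hobs : (obsvMat A C l).rank = n)
    (hrec : ∀ (x : ℕ → Fin n → ℝ) (u : ℕ → Fin m → ℝ),
      (∀ k, x (k + 1) = A.mulVec (x k) + B.mulVec (u k)) →
      ∀ k, C.mulVec (x (k + l)) + D0.mulVec (u (k + l)) =
        (∑ j : Fin l, (F j).mulVec (C.mulVec (x (k + (j : ℕ))) + D0.mulVec (u (k + (j : ℕ)))))
        + (∑ j : Fin l, (G j).mulVec (u (k + (j : ℕ))))
        + D0.mulVec (u (k + l))) :
    Controllable (Atil l m p F G) (Btil l m p D0) ↔ p * l = n :=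
  ⟨ECIS.forward_dir A B C D0 F G hobs hrec,
   ECIS.reverse_dir A B C D0 hl F G hctrb hobs hrec⟩
end

section
/- Willems' fundamental lemma (one direction): if {u_k^d, y_k^d}_{k=0}^{N−1} is a trajectory of a controllable LTI system of order n and (ū, ȳ) is any length-L trajectory of the same system, and u^d is persistently exciting of order L+n, then there exists α ∈ ℝ^{N−L+1} with [H_L(u^d); H_L(y^d)] α = [ū; ȳ]. -/
/-!
Let `X = [x_0 ⋯ x_{N-L}]` be the data states. It suffices that `[H_L(u); X]` has full row rank:
then `[ū; x̄_0]` is `[H_L(u); X] α` for some `α`, and since the dynamics are linear, the same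
combination of shifted data windows has input `ū` and initial state `x̄_0`, hence state `x̄` and
output `ȳ`.

For the rank, take a row `(η, ξ)` annihilating every column `(u_j, …, u_{j+L-1}, x_j)`. Because
`ξ x_{j+1} = ξA x_j + ξB u_j`, shifting it yields rows `(ξA^{i-1}B, …, ξB, η; ξA^i)` annihilating
the columns of the deeper Hankel matrices. Combining `i = 0, …, n` with the coefficients of the
characteristic polynomial of `A` removes the state part (Cayley–Hamilton) and leaves a row of the
left kernel of `H_{L+n}(u)`, which is zero by persistency of excitation. As the characteristic
polynomial is monic, this forces `η = 0` and `ξA^tB = 0` for `t < n`, so `ξ = 0` by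
controllability.
-/

open Matrix

/-- `(u, y)` is a length-`len` input-output trajectory of the LTI system `(A,B,C,D)`:
there is a state sequence consistent with the dynamics on the first `len` steps. -/
def IsTraj {n m p : ℕ} (A : Matrix (Fin n) (Fin n) ℝ) (B : Matrix (Fin n) (Fin m) ℝ)
    (C : Matrix (Fin p) (Fin n) ℝ) (D : Matrix (Fin p) (Fin m) ℝ)
    (u : ℕ → Fin m → ℝ) (y : ℕ → Fin p → ℝ) (len : ℕ) : Prop :=
  ∃ x : ℕ → Fin n → ℝ,
    (∀ k < len, x (k + 1) = A.mulVec (x k) + B.mulVec (u k)) ∧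
    (∀ k < len, y k = C.mulVec (x k) + D.mulVec (u k))

/-- Block Hankel matrix of depth `L` built from `u_0, ..., u_{N-1}`. -/
def hankel {m : ℕ} (N L : ℕ) (u : ℕ → Fin m → ℝ) :
    Matrix (Fin L × Fin m) (Fin (N - L + 1)) ℝ :=
  fun q j => u ((j : ℕ) + (q.1 : ℕ)) q.2

open Finset

theorem Matrix.vecMul_injective_of_rank_eq_card {K ι κ : Type*} [Field K] [Fintype ι]
    [Fintype κ] {M : Matrix ι κ K} (h : M.rank = Fintype.card ι) :
    Function.Injective M.vecMul := by
  rw [Matrix.vecMul_injective_iff, linearIndependent_iff_card_eq_finrank_span, ← h,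
    rank_eq_finrank_span_row, Set.finrank]

theorem Matrix.mulVec_surjective_of_vecMul_injective {K ι κ : Type*} [Field K] [Fintype ι]
    [Fintype κ] {M : Matrix ι κ K} (h : Function.Injective M.vecMul) :
    Function.Surjective M.mulVec := by
  have hrange : LinearMap.range M.mulVecLin = ⊤ := Submodule.eq_top_of_finrank_eq <| by
    rw [Module.finrank_fintype_fun_eq_card]
    exact (Matrix.vecMul_injective_iff.mp h).rank_matrix
  exact LinearMap.range_eq_top.mp hrange

theorem eq_zero_of_monic_recurrence {R M : Type*} [Semiring R] [AddCommMonoid M] [Module R M]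
    {d K : ℕ} {c : ℕ → R} (hc : c d = 1) {f : ℕ → M} (hf : ∀ r, K ≤ r → f r = 0)
    (hrec : ∀ s < K, ∑ i ∈ range (d + 1), c i • f (s + d - i) = 0) : f = 0 := by
  suffices h : ∀ t r, K ≤ r + t → f r = 0 from funext fun r => h K r (by omega)
  intro t
  induction t with
  | zero => exact hf
  | succ t ih =>
    intro r hr
    by_cases hrK : K ≤ r
    · exact hf r hrK
    have h := hrec r (by omega)
    rwa [sum_range_succ, sum_eq_zero fun i hi => by rw [ih _ (by simp at hi; omega), smul_zero],
      zero_add, Nat.add_sub_cancel, hc, one_smul] at h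

section StateSpace

variable {R σ ι : Type*} [CommRing R] [Fintype σ] [Fintype ι]
  (A : Matrix σ σ R) (B : Matrix σ ι R)

def IsStateSeq (u : ℕ → ι → R) (x : ℕ → σ → R) (len : ℕ) : Prop :=
  ∀ k < len, x (k + 1) = A *ᵥ x k + B *ᵥ u k

variable {A B}

theorem IsStateSeq.eq_of_input_eq {u u' : ℕ → ι → R} {x x' : ℕ → σ → R} {len : ℕ}
    (hx : IsStateSeq A B u x len) (hx' : IsStateSeq A B u' x' len)
    (hu : ∀ k < len, u k = u' k) (h0 : x 0 = x' 0) : ∀ k ≤ len, x k = x' k := by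
  intro k hk
  induction k with
  | zero => exact h0
  | succ k ih => rw [hx k hk, hx' k hk, ih (by omega), hu k hk]

theorem sum_smul_mulVec_add_mulVec {κ τ : Type*} [Fintype τ] (s : Finset κ) (α : κ → R)
    (C : Matrix τ σ R) (D : Matrix τ ι R) (x : κ → σ → R) (u : κ → ι → R) :
    ∑ j ∈ s, α j • (C *ᵥ x j + D *ᵥ u j) = C *ᵥ ∑ j ∈ s, α j • x j + D *ᵥ ∑ j ∈ s, α j • u j := by
  simp only [mulVec_sum, mulVec_smul, smul_add, sum_add_distrib]

theorem IsStateSeq.sum_smul_shift {u : ℕ → ι → R} {x : ℕ → σ → R} {N M len : ℕ}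
    (hx : IsStateSeq A B u x N) (hlen : M + len ≤ N + 1) (α : Fin M → R) :
    IsStateSeq A B (fun k => ∑ j, α j • u (j + k)) (fun k => ∑ j, α j • x (j + k)) len := by
  intro k hk
  rw [← sum_smul_mulVec_add_mulVec]
  exact sum_congr rfl fun j _ => by rw [← add_assoc, hx _ (by omega)]

end StateSpace

section WindowFunctional

variable {R σ ι : Type*} [CommRing R] [Fintype σ]
  (A : Matrix σ σ R) (B : Matrix σ ι R)

/-- The row `[η_0 ⋯ η_{K-1} | ξ]`, for `p = (η, ξ)`, applied to the column
`(u_j, …, u_{j+K-1}, x_j)` of `[H_K(u); X]`. -/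
def windowEval [Fintype ι] (K : ℕ) (p : (ℕ → ι → R) × (σ → R)) (u : ℕ → ι → R) (x : ℕ → σ → R)
    (j : ℕ) : R :=
  ∑ r ∈ range K, p.1 r ⬝ᵥ u (j + r) + p.2 ⬝ᵥ x j

def windowShift (p : (ℕ → ι → R) × (σ → R)) : (ℕ → ι → R) × (σ → R) :=
  (fun | 0 => p.2 ᵥ* B | r + 1 => p.1 r, p.2 ᵥ* A)

variable {A B}

theorem windowEval_windowShift [Fintype ι] {u : ℕ → ι → R} {x : ℕ → σ → R} {j : ℕ}
    (hx : x (j + 1) = A *ᵥ x j + B *ᵥ u j) (K : ℕ) (p : (ℕ → ι → R) × (σ → R)) :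
    windowEval (K + 1) (windowShift A B p) u x j = windowEval K p u x (j + 1) := by
  simp only [windowEval, windowShift, sum_range_succ', hx, dotProduct_add, dotProduct_mulVec,
    add_zero, add_assoc j, add_comm 1]
  abel

theorem windowEval_windowShift_iterate [Fintype ι] {u : ℕ → ι → R} {x : ℕ → σ → R} {N : ℕ}
    (hx : IsStateSeq A B u x N) {i j : ℕ} (hij : j + i ≤ N) (K : ℕ)
    (p : (ℕ → ι → R) × (σ → R)) :
    windowEval (K + i) ((windowShift A B)^[i] p) u x j = windowEval K p u x (j + i) := by
  induction i generalizing K p with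
  | zero => rfl
  | succ i ih =>
    rw [Function.iterate_succ_apply, ← add_assoc, add_right_comm, ih (by omega),
      windowEval_windowShift (hx _ (by omega)), add_assoc]

theorem windowShift_iterate_snd [DecidableEq σ] (p : (ℕ → ι → R) × (σ → R)) (i : ℕ) :
    ((windowShift A B)^[i] p).2 = p.2 ᵥ* A ^ i := by
  induction i with
  | zero => simp
  | succ i ih => rw [Function.iterate_succ_apply', pow_succ, ← vecMul_vecMul, ← ih]; rfl

theorem windowShift_iterate_fst_add (p : (ℕ → ι → R) × (σ → R)) (i r : ℕ) :
    ((windowShift A B)^[i] p).1 (r + i) = p.1 r := by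
  induction i with
  | zero => rfl
  | succ i ih => rw [Function.iterate_succ_apply', ← add_assoc, ← ih]; rfl

theorem windowShift_iterate_fst_of_lt [DecidableEq σ] (p : (ℕ → ι → R) × (σ → R)) {i t : ℕ}
    (ht : t < i) :
    ((windowShift A B)^[i] p).1 (i - 1 - t) = p.2 ᵥ* (A ^ t * B) := by
  obtain ⟨d, rfl⟩ := Nat.exists_eq_add_of_lt ht
  rw [show t + d + 1 = d + (t + 1) by omega, Function.iterate_add_apply,
    show d + (t + 1) - 1 - t = 0 + d by omega, windowShift_iterate_fst_add,
    Function.iterate_succ_apply', windowShift]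
  simp [windowShift_iterate_snd, vecMul_vecMul]

theorem windowShift_iterate_fst_eq_zero {p : (ℕ → ι → R) × (σ → R)} {K : ℕ}
    (hp : ∀ r, K ≤ r → p.1 r = 0) (i : ℕ) : ∀ s, K + i ≤ s → ((windowShift A B)^[i] p).1 s = 0 := by
  intro s hs
  obtain ⟨r, rfl⟩ := Nat.exists_eq_add_of_le' (le_of_add_le_right hs)
  rw [windowShift_iterate_fst_add, hp r (by omega)]

theorem windowEval_of_le [Fintype ι] {K K' : ℕ} (hK : K ≤ K') {p : (ℕ → ι → R) × (σ → R)}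
    (hp : ∀ r, K ≤ r → p.1 r = 0) (u : ℕ → ι → R) (x : ℕ → σ → R) (j : ℕ) :
    windowEval K' p u x j = windowEval K p u x j := by
  obtain ⟨d, rfl⟩ := Nat.exists_eq_add_of_le hK
  simp [windowEval, sum_range_add, hp]

theorem windowEval_sum_smul [Fintype ι] {κ : Type*} (s : Finset κ) (c : κ → R)
    (p : κ → (ℕ → ι → R) × (σ → R)) (K : ℕ) (u : ℕ → ι → R) (x : ℕ → σ → R) (j : ℕ) :
    windowEval K (∑ i ∈ s, c i • p i) u x j = ∑ i ∈ s, c i * windowEval K (p i) u x j := by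
  simp only [windowEval, Prod.fst_sum, Prod.snd_sum, Prod.smul_fst, Prod.smul_snd, Finset.sum_apply,
    Pi.smul_apply, sum_dotProduct, smul_dotProduct, smul_eq_mul, mul_add, sum_add_distrib,
    mul_sum]
  rw [sum_comm]

end WindowFunctional

section CayleyHamilton

variable {R σ ι : Type*} [CommRing R] [Fintype σ] [DecidableEq σ]
  (A : Matrix σ σ R) (B : Matrix σ ι R)

noncomputable def charpolyCombination (p : (ℕ → ι → R) × (σ → R)) : (ℕ → ι → R) × (σ → R) :=
  ∑ i ∈ range (Fintype.card σ + 1), A.charpoly.coeff i • (windowShift A B)^[i] p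

variable {A B}

theorem charpolyCombination_snd [Nontrivial R] (p : (ℕ → ι → R) × (σ → R)) :
    (charpolyCombination A B p).2 = 0 := by
  have hCH := A.aeval_self_charpoly
  rw [Polynomial.aeval_eq_sum_range, charpoly_natDegree_eq_dim] at hCH
  simp only [charpolyCombination, Prod.snd_sum, Prod.smul_snd, windowShift_iterate_snd,
    ← vecMul_smul, ← vecMul_sum, hCH, vecMul_zero]

theorem charpolyCombination_fst (p : (ℕ → ι → R) × (σ → R)) (s : ℕ) :
    (charpolyCombination A B p).1 s = ∑ i ∈ range (Fintype.card σ + 1),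
      A.charpoly.coeff i • ((windowShift A B)^[Fintype.card σ] p).1 (s + Fintype.card σ - i) := by
  simp only [charpolyCombination, Prod.fst_sum, Prod.smul_fst, Finset.sum_apply, Pi.smul_apply]
  refine sum_congr rfl fun i hi => ?_
  have hi : i ≤ Fintype.card σ := Nat.lt_succ_iff.mp (mem_range.mp hi)
  rw [← Nat.sub_add_cancel hi, Function.iterate_add_apply, Nat.sub_add_cancel hi,
    Nat.add_sub_assoc hi, windowShift_iterate_fst_add]

theorem windowEval_charpolyCombination [Fintype ι] {u : ℕ → ι → R} {x : ℕ → σ → R} {N K J : ℕ}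
    (hx : IsStateSeq A B u x N) {p : (ℕ → ι → R) × (σ → R)} (hp : ∀ r, K ≤ r → p.1 r = 0)
    (h : ∀ j ≤ J, windowEval K p u x j = 0) {j : ℕ} (hjJ : j + Fintype.card σ ≤ J)
    (hjN : j + Fintype.card σ ≤ N) :
    windowEval (K + Fintype.card σ) (charpolyCombination A B p) u x j = 0 := by
  rw [charpolyCombination, windowEval_sum_smul]
  refine sum_eq_zero fun i hi => ?_
  have hi : i ≤ Fintype.card σ := Nat.lt_succ_iff.mp (mem_range.mp hi)
  rw [windowEval_of_le (by omega) (windowShift_iterate_fst_eq_zero hp i),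
    windowEval_windowShift_iterate hx (by omega), h _ (by omega), mul_zero]

end CayleyHamilton

section Hankel

variable {m N K : ℕ} (u : ℕ → Fin m → ℝ)

theorem vecMul_hankel_apply (η : ℕ → Fin m → ℝ) (j : Fin (N - K + 1)) :
    ((fun q : Fin K × Fin m => η q.1 q.2) ᵥ* hankel N K u) j =
      ∑ s ∈ range K, η s ⬝ᵥ u (j + s) := by
  simp only [vecMul, dotProduct, hankel, Fintype.sum_prod_type]
  exact Fin.sum_univ_eq_sum_range (fun s => ∑ b, η s b * u (j + s) b) K

theorem hankel_mulVec_apply (α : Fin (N - K + 1) → ℝ) (k : Fin K) (b : Fin m) :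
    (hankel N K u *ᵥ α) (k, b) = (∑ j, α j • u (j + k)) b := by
  simp [mulVec, dotProduct, hankel, Finset.sum_apply, mul_comm]

variable {u}

theorem eq_zero_of_rank_hankel (hpe : (hankel N K u).rank = m * K) {η : ℕ → Fin m → ℝ}
    (h : ∀ j ≤ N - K, ∑ s ∈ range K, η s ⬝ᵥ u (j + s) = 0) : ∀ s < K, η s = 0 := by
  have hinj := vecMul_injective_of_rank_eq_card (M := hankel N K u) (by simpa [mul_comm] using hpe)
  have hη : (fun q : Fin K × Fin m => η q.1 q.2) = 0 :=
    hinj <| funext fun j => by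
      beta_reduce
      rw [vecMul_hankel_apply, zero_vecMul, Pi.zero_apply]
      exact h j (Nat.lt_succ_iff.mp j.isLt)
  exact fun s hs => funext fun b => congrFun hη (⟨s, hs⟩, b)

end Hankel

theorem eq_zero_of_windowEval_eq_zero {n m N L : ℕ} (hN : L + n ≤ N)
    {A : Matrix (Fin n) (Fin n) ℝ} {B : Matrix (Fin n) (Fin m) ℝ}
    (hctrb : (Matrix.of fun (i : Fin n) (q : Fin n × Fin m) => (A ^ (q.1 : ℕ) * B) i q.2).rank = n)
    {u : ℕ → Fin m → ℝ} {x : ℕ → Fin n → ℝ} (hx : IsStateSeq A B u x N)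
    (hpe : (hankel N (L + n) u).rank = m * (L + n)) {p : (ℕ → Fin m → ℝ) × (Fin n → ℝ)}
    (hp : ∀ r, L ≤ r → p.1 r = 0) (h : ∀ j ≤ N - L, windowEval L p u x j = 0) : p = 0 := by
  -- `F = (ξA^{n-1}B, …, ξAB, ξB, η_0, η_1, …)`
  set F := ((windowShift A B)^[n] p).1
  have hcomb : ∀ s < L + n, (charpolyCombination A B p).1 s = 0 := by
    refine eq_zero_of_rank_hankel hpe fun j hj => ?_
    have hj' := windowEval_charpolyCombination hx hp h (j := j)
      (by rw [Fintype.card_fin]; omega) (by rw [Fintype.card_fin]; omega)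
    rwa [Fintype.card_fin, windowEval, charpolyCombination_snd, zero_dotProduct, add_zero] at hj'
  have hF : F = 0 := by
    have hcn : A.charpoly.coeff n = 1 := by simpa using A.charpoly_monic.coeff_natDegree
    refine eq_zero_of_monic_recurrence hcn (windowShift_iterate_fst_eq_zero hp n) fun s hs => ?_
    simpa only [charpolyCombination_fst, Fintype.card_fin] using hcomb s hs
  refine Prod.ext (funext fun r => ?_) (vecMul_injective_of_rank_eq_card (by simpa using hctrb) ?_)
  · rw [← windowShift_iterate_fst_add p n r]
    exact congrFun hF (r + n)
  · funext q
    beta_reduce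
    rw [Prod.snd_zero, zero_vecMul]
    change (p.2 ᵥ* (A ^ (q.1 : ℕ) * B)) q.2 = 0
    rw [← windowShift_iterate_fst_of_lt p q.1.isLt]
    exact congrFun (congrFun hF _) q.2

theorem vecMul_fromRows_hankel_injective {n m N L : ℕ} (hN : L + n ≤ N)
    {A : Matrix (Fin n) (Fin n) ℝ} {B : Matrix (Fin n) (Fin m) ℝ}
    (hctrb : (Matrix.of fun (i : Fin n) (q : Fin n × Fin m) => (A ^ (q.1 : ℕ) * B) i q.2).rank = n)
    {u : ℕ → Fin m → ℝ} {x : ℕ → Fin n → ℝ} (hx : IsStateSeq A B u x N)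
    (hpe : (hankel N (L + n) u).rank = m * (L + n)) :
    Function.Injective
      (fromRows (hankel N L u) (Matrix.of fun i (j : Fin (N - L + 1)) => x j i)).vecMul := by
  rw [← coe_vecMulLinear, injective_iff_map_eq_zero]
  intro w hw
  set p : (ℕ → Fin m → ℝ) × (Fin n → ℝ) :=
    (fun r b => if h : r < L then w (.inl (⟨r, h⟩, b)) else 0, w ∘ .inr)
  have hinl : w ∘ Sum.inl = fun q : Fin L × Fin m => p.1 q.1 q.2 := by
    funext q; simp [p, q.1.isLt]
  rw [coe_vecMulLinear] at hw
  beta_reduce at hw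
  rw [vecMul_fromRows, hinl] at hw
  have hp : p = 0 := by
    refine eq_zero_of_windowEval_eq_zero hN hctrb hx hpe (fun r hr => ?_) fun j hj => ?_
    · funext b; simp [p, hr.not_gt]
    · have hwj := congrFun hw ⟨j, by omega⟩
      rwa [Pi.add_apply, vecMul_hankel_apply] at hwj
  funext q
  rcases q with q | i
  · simpa [p, q.1.isLt] using congrFun (congrFun (congrArg Prod.fst hp) q.1) q.2
  · exact congrFun (congrArg Prod.snd hp) i

theorem willems_fundamental_lemma_general {n m p N L : ℕ} (hN : L + n ≤ N)
    (A : Matrix (Fin n) (Fin n) ℝ) (B : Matrix (Fin n) (Fin m) ℝ)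
    (C : Matrix (Fin p) (Fin n) ℝ) (D : Matrix (Fin p) (Fin m) ℝ)
    (hctrb : (Matrix.of fun (i : Fin n) (q : Fin n × Fin m) =>
        (A ^ (q.1 : ℕ) * B) i q.2).rank = n)
    (ud : ℕ → Fin m → ℝ) (yd : ℕ → Fin p → ℝ)
    (hdata : IsTraj A B C D ud yd N)
    (hpe : (hankel N (L + n) ud).rank = m * (L + n))
    (ubar : ℕ → Fin m → ℝ) (ybar : ℕ → Fin p → ℝ)
    (htraj : IsTraj A B C D ubar ybar L) :
    ∃ α : Fin (N - L + 1) → ℝ,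
      (∀ k < L, ubar k = ∑ j : Fin (N - L + 1), α j • ud ((j : ℕ) + k)) ∧
      (∀ k < L, ybar k = ∑ j : Fin (N - L + 1), α j • yd ((j : ℕ) + k)) := by
  obtain ⟨xd, hxd, hyd⟩ := hdata
  obtain ⟨xb, hxb, hyb⟩ := htraj
  obtain ⟨α, hα⟩ := mulVec_surjective_of_vecMul_injective
    (vecMul_fromRows_hankel_injective hN hctrb hxd hpe) (Sum.elim (fun q => ubar q.1 q.2) (xb 0))
  have hu : ∀ k < L, ubar k = ∑ j, α j • ud (j + k) := fun k hk => funext fun b => by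
    simpa [hankel_mulVec_apply] using (congrFun hα (.inl (⟨k, hk⟩, b))).symm
  have hx0 : xb 0 = ∑ j, α j • xd (j + 0) := funext fun i => by
    simpa [mulVec, dotProduct, Finset.sum_apply, mul_comm] using (congrFun hα (.inr i)).symm
  have hstate := IsStateSeq.eq_of_input_eq hxb (IsStateSeq.sum_smul_shift hxd (by omega) α) hu hx0
  refine ⟨α, hu, fun k hk => ?_⟩
  rw [hyb k hk, hstate k hk.le, hu k hk, ← sum_smul_mulVec_add_mulVec]
  exact sum_congr rfl fun j _ => congrArg (α j • ·) (hyd _ (by have := j.isLt; omega)).symm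

/-- Willems' fundamental lemma (one direction): if `(u^d, y^d)` is a length-`N` trajectory of
a controllable LTI system of order `n`, `(ū, ȳ)` is any length-`L` trajectory of the same
system, and `u^d` is persistently exciting of order `L + n`, then some `α ∈ ℝ^{N−L+1}` gives
`[H_L(u^d); H_L(y^d)] α = [ū; ȳ]`. -/
theorem willems_fundamental_lemma {n m p N L : ℕ} (hL : 0 < L) (hN : L + n ≤ N)
    (A : Matrix (Fin n) (Fin n) ℝ) (B : Matrix (Fin n) (Fin m) ℝ)
    (C : Matrix (Fin p) (Fin n) ℝ) (D : Matrix (Fin p) (Fin m) ℝ)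
    (hctrb : (Matrix.of fun (i : Fin n) (q : Fin n × Fin m) =>
        (A ^ (q.1 : ℕ) * B) i q.2).rank = n)
    (ud : ℕ → Fin m → ℝ) (yd : ℕ → Fin p → ℝ)
    (hdata : IsTraj A B C D ud yd N)
    (hpe : (hankel N (L + n) ud).rank = m * (L + n))
    (ubar : ℕ → Fin m → ℝ) (ybar : ℕ → Fin p → ℝ)
    (htraj : IsTraj A B C D ubar ybar L) :
    ∃ α : Fin (N - L + 1) → ℝ,
      (∀ k < L, ubar k = ∑ j : Fin (N - L + 1), α j • ud ((j : ℕ) + k)) ∧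
      (∀ k < L, ybar k = ∑ j : Fin (N - L + 1), α j • yd ((j : ℕ) + k)) :=
  willems_fundamental_lemma_general hN A B C D hctrb ud yd hdata hpe ubar ybar htraj
end

section
/- If X ≻ 0, Q̂ := X⁻¹ − S ≻ 0 for a symmetric matrix S ≽ 0, and −X + A_cl Q̂⁻¹ A_clᵀ ≺ 0, then A_clᵀ X⁻¹ A_cl − X⁻¹ + S ≺ 0. -/
/-!
The block matrix `M = [[X, A], [Aᵀ, X⁻¹ - S]]` has a positive definite block in each diagonal
corner, so its positive definiteness is equivalent to that of either Schur complement.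
The complement of the lower-right block is `X - A (X⁻¹ - S)⁻¹ Aᵀ`, positive definite by
hypothesis, so `M ≻ 0`; the complement of the upper-left block is then
`X⁻¹ - S - Aᵀ X⁻¹ A ≻ 0`, which is the claim.
-/

open Matrix
namespace Matrix

theorem posDef_submatrix_equiv {m n R : Type*} [Ring R] [PartialOrder R] [StarRing R]
    {M : Matrix n n R} (e : m ≃ n) : (M.submatrix e e).PosDef ↔ M.PosDef :=
  ⟨fun h => by simpa using h.submatrix e.symm.injective, fun h => h.submatrix e.injective⟩

variable {m n R : Type*} [Fintype m] [Fintype n]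
  [CommRing R] [PartialOrder R] [StarRing R] [StarOrderedRing R]

theorem posDef_fromBlocks₁₁_iff [DecidableEq m] {A : Matrix m m R} (B : Matrix m n R)
    (D : Matrix n n R) (hA : A.PosDef) [Invertible A] :
    (fromBlocks A B Bᴴ D).PosDef ↔ (D - Bᴴ * A⁻¹ * B).PosDef := by
  rw [posDef_iff_dotProduct_mulVec, posDef_iff_dotProduct_mulVec,
    IsHermitian.fromBlocks₁₁ _ _ hA.1]
  refine and_congr_right fun _ => ⟨fun h y hy => ?_, fun h z hz => ?_⟩
  · have hz : -((A⁻¹ * B) *ᵥ y) ⊕ᵥ y ≠ 0 := fun h0 => hy (congrArg (· ∘ Sum.inr) h0)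
    have := h hz
    rwa [dotProduct_mulVec, schur_complement_eq₁₁ B D _ _ hA.1, neg_add_cancel, dotProduct_zero,
      zero_add, ← dotProduct_mulVec] at this
  · rw [dotProduct_mulVec, ← Sum.elim_comp_inl_inr z, schur_complement_eq₁₁ B D _ _ hA.1,
      ← dotProduct_mulVec, ← dotProduct_mulVec (star (z ∘ Sum.inr))]
    by_cases hy : z ∘ Sum.inr = 0
    · have hx : z ∘ Sum.inl ≠ 0 := fun hx =>
        hz (by rw [← Sum.elim_comp_inl_inr z, hx, hy, Sum.elim_zero_zero])
      simpa [hy] using hA.dotProduct_mulVec_pos hx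
    · exact add_pos_of_nonneg_of_pos (hA.posSemidef.dotProduct_mulVec_nonneg _) (h hy)

theorem posDef_fromBlocks₂₂_iff [DecidableEq n] (A : Matrix m m R) (B : Matrix m n R)
    {D : Matrix n n R} (hD : D.PosDef) [Invertible D] :
    (fromBlocks A B Bᴴ D).PosDef ↔ (A - B * D⁻¹ * Bᴴ).PosDef := by
  rw [← posDef_submatrix_equiv (Equiv.sumComm n m), Equiv.sumComm_apply,
    fromBlocks_submatrix_sum_swap_sum_swap]
  convert! posDef_fromBlocks₁₁_iff Bᴴ A hD <;> simp

end Matrix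

theorem double_schur_step_general {n : ℕ}
    (X S Acl : Matrix (Fin n) (Fin n) ℝ)
    (hX : X.PosDef)
    (hQ : (X⁻¹ - S).PosDef)
    (h : (-(-X + Acl * (X⁻¹ - S)⁻¹ * Aclᵀ)).PosDef) :
    (-(Aclᵀ * X⁻¹ * Acl - X⁻¹ + S)).PosDef := by
  have := hX.isUnit.invertible
  have := hQ.isUnit.invertible
  rw [neg_add_eq_sub, neg_sub, ← conjTranspose_eq_transpose_of_trivial] at h
  rw [sub_add, neg_sub, ← conjTranspose_eq_transpose_of_trivial]
  exact (posDef_fromBlocks₁₁_iff Acl _ hX).1 ((posDef_fromBlocks₂₂_iff X Acl hQ).2 h)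

/-- Double-Schur-complement step: if `X ≻ 0`, `Q̂ := X⁻¹ − S ≻ 0` for a symmetric `S ≽ 0`,
and `−X + A_cl Q̂⁻¹ A_clᵀ ≺ 0`, then `A_clᵀ X⁻¹ A_cl − X⁻¹ + S ≺ 0`. -/
theorem double_schur_step {n : ℕ}
    (X S Acl : Matrix (Fin n) (Fin n) ℝ)
    (hX : X.PosDef) (hS : S.PosSemidef)
    (hQ : (X⁻¹ - S).PosDef)
    (h : (-(-X + Acl * (X⁻¹ - S)⁻¹ * Aclᵀ)).PosDef) :
    (-(Aclᵀ * X⁻¹ * Acl - X⁻¹ + S)).PosDef :=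
  double_schur_step_general X S Acl hX hQ h
end
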